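/- For any connected graph G of order at least 2, the zero forcing number of G is at most twice the zero forcing number of its line graph: Z(G) ≤ 2·Z(L(G)). -/

import Mathlib

open SimpleGraph

variable {V : Type*}

/-- `W` is a resolving set of `G`: every pair of distinct vertices is resolved
by some vertex of `W` via graph distance. -/
def IsResolvingSet (G : SimpleGraph V) (W : Set V) : Prop :=
  ∀ u v : V, u ≠ v → ∃ w ∈ W, G.dist u w ≠ G.dist v w

/-- The metric dimension of `G`: minimum cardinality of a resolving set. -/
noncomputable def metricDim (G : SimpleGraph V) : ℕ :=
  sInf {k | ∃ W : Set V, W.ncard = k ∧ IsResolvingSet G W}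

/-- One global application of the zero-forcing color-change rule:
a black vertex `u` forces its unique white neighbor to become black. -/
def zfStep (G : SimpleGraph V) (S : Set V) : Set V :=
  S ∪ {v | ∃ u ∈ S, G.Adj u v ∧ ∀ w, G.Adj u w → w ∉ S → w = v}

/-- `S` is a zero forcing set of `G` if iterating the color-change rule
starting from `S` eventually turns all vertices black. -/
def IsZeroForcingSet (G : SimpleGraph V) (S : Set V) : Prop :=
  ∃ m : ℕ, (zfStep G)^[m] S = Set.univ

/-- The zero forcing number of `G`: minimum cardinality of a zero forcing set. -/
noncomputable def zeroForcingNum (G : SimpleGraph V) : ℕ :=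
  sInf {k | ∃ S : Set V, S.ncard = k ∧ IsZeroForcingSet G S}

/-- The wheel graph `W_{1,n} = C_n + K_1`: hub `none` joined to the cycle `C_n`
on vertices `some i`, `i : Fin n`. -/
def wheelGraph (n : ℕ) : SimpleGraph (Option (Fin n)) :=
  SimpleGraph.fromRel (fun u v =>
    match u, v with
    | none, some _ => True
    | some i, some j => ((i : ℕ) : ZMod n) + 1 = ((j : ℕ) : ZMod n)
    | _, _ => False)

/-- The bouquet of `n` circles of lengths `k 0 + 1, …, k (n-1) + 1`: the cut
vertex is `none`; the `i`-th circle consists of `none` together with the vertices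
`some ⟨i, j⟩`, `j : Fin (k i)`, in cyclic order. -/
def bouquet (n : ℕ) (k : Fin n → ℕ) : SimpleGraph (Option (Σ i : Fin n, Fin (k i))) :=
  SimpleGraph.fromRel (fun u v =>
    match u, v with
    | none, some a => (a.2 : ℕ) = 0 ∨ (a.2 : ℕ) = k a.1 - 1
    | some a, some b => a.1 = b.1 ∧ ((b.2 : ℕ) = (a.2 : ℕ) + 1)
    | _, _ => False)

/-- The path cover number of `G`: the minimum number of vertex-disjoint induced
paths covering all the vertices of `G`. -/
noncomputable def pathCoverNum (G : SimpleGraph V) : ℕ :=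
  sInf {m | ∃ f : V → Fin m, ∀ i : Fin m,
    ∃ k, 1 ≤ k ∧ Nonempty ((G.induce (f ⁻¹' {i})) ≃g SimpleGraph.pathGraph k)}

/-- `G` contains a Hamiltonian path. -/
def HasHamiltonianPath [DecidableEq V] (G : SimpleGraph V) : Prop :=
  ∃ (u v : V) (p : G.Walk u v), p.IsHamiltonian

/-! The endpoints of a zero forcing set `S` of `L(G)` form a zero forcing set of `G` of size at
most `2 |S|`, provided `G` has no isolated vertex. Indeed, if an edge `g` forces an edge `e = xv`
in `L(G)` with `v ∉ g`, then the shared vertex `x` forces `v` in `G`: every other white neighbour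
`w` of `x` would make `xw` a second white neighbour of `g`. So the black endpoint set keeps pace
with the black edge set step by step, and once every edge is black so is every vertex. -/

namespace SimpleGraph

variable {G : SimpleGraph V}

theorem zfStep_mono : Monotone (zfStep G) := by
  rintro S T hST v (hv | ⟨u, hu, huv, hforce⟩)
  · exact Or.inl (hST hv)
  · by_cases hvT : v ∈ T
    · exact Or.inl hvT
    · exact Or.inr ⟨u, hST hu, huv, fun w hw hwT => hforce w hw fun hwS => hwT (hST hwS)⟩

theorem zeroForcingNum_le_ncard {S : Set V} (hS : IsZeroForcingSet G S) :
    zeroForcingNum G ≤ S.ncard :=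
  Nat.sInf_le ⟨S, rfl, hS⟩

theorem exists_isZeroForcingSet_ncard_eq_zeroForcingNum [Finite V] :
    ∃ S : Set V, IsZeroForcingSet G S ∧ S.ncard = zeroForcingNum G := by
  obtain ⟨S, hS, hZ⟩ :=
    Nat.sInf_mem (s := {k | ∃ S : Set V, S.ncard = k ∧ IsZeroForcingSet G S})
      ⟨_, Set.univ, rfl, 0, rfl⟩
  exact ⟨S, hZ, hS⟩

variable (G) in
def edgeEndpoints (S : Set G.edgeSet) : Set V := ⋃ e ∈ S, {v | v ∈ (e : Sym2 V)}

theorem mem_edgeEndpoints {S : Set G.edgeSet} {v : V} :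
    v ∈ G.edgeEndpoints S ↔ ∃ e ∈ S, v ∈ (e : Sym2 V) := by
  simp [edgeEndpoints]

theorem ncard_edgeEndpoints_le {S : Set G.edgeSet} (hS : S.Finite) :
    (G.edgeEndpoints S).ncard ≤ 2 * S.ncard := by
  classical
  have hE : G.edgeEndpoints S = ↑(hS.toFinset.biUnion fun e => (e : Sym2 V).toFinset) := by
    ext v
    simp [mem_edgeEndpoints]
  rw [hE, Set.ncard_coe_finset, Set.ncard_eq_toFinset_card S hS, mul_comm]
  refine Finset.card_biUnion_le_card_mul _ _ 2 fun e _ => ?_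
  rw [Sym2.card_toFinset]
  split_ifs <;> omega

theorem edgeEndpoints_zfStep_lineGraph_subset (S : Set G.edgeSet) :
    G.edgeEndpoints (zfStep G.lineGraph S) ⊆ zfStep G (G.edgeEndpoints S) := by
  intro v hv
  obtain ⟨e, he | ⟨g, hg, hge, hforce⟩, hve⟩ := mem_edgeEndpoints.1 hv
  · exact Or.inl (mem_edgeEndpoints.2 ⟨e, he, hve⟩)
  by_cases hvg : v ∈ (g : Sym2 V)
  · exact Or.inl (mem_edgeEndpoints.2 ⟨g, hg, hvg⟩)
  obtain ⟨-, x, hxg, hxe⟩ := lineGraph_adj_iff_exists.1 hge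
  have hxv : x ≠ v := fun h => hvg (h ▸ hxg)
  have he_eq : (e : Sym2 V) = s(x, v) := (Sym2.mem_and_mem_iff hxv).1 ⟨hxe, hve⟩
  have hxv_adj : G.Adj x v := G.mem_edgeSet.1 (he_eq ▸ e.2)
  refine Or.inr ⟨x, mem_edgeEndpoints.2 ⟨g, hg, hxg⟩, hxv_adj, fun w hxw hw => ?_⟩
  set f : G.edgeSet := ⟨s(x, w), G.mem_edgeSet.2 hxw⟩
  have hwf : w ∈ (f : Sym2 V) := Sym2.mem_mk_right x w
  have hfg : f ≠ g := fun h => hw (mem_edgeEndpoints.2 ⟨g, hg, h ▸ hwf⟩)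
  have hfS : f ∉ S := fun h => hw (mem_edgeEndpoints.2 ⟨f, h, hwf⟩)
  have hgf : G.lineGraph.Adj g f :=
    lineGraph_adj_iff_exists.2 ⟨hfg.symm, x, hxg, Sym2.mem_mk_left x w⟩
  have hfe : f = e := hforce f hgf hfS
  have : s(x, w) = s(x, v) := by rw [← he_eq, ← hfe]
  exact Sym2.congr_right.1 this

theorem edgeEndpoints_zfStep_lineGraph_iterate_subset (S : Set G.edgeSet) (m : ℕ) :
    G.edgeEndpoints ((zfStep G.lineGraph)^[m] S) ⊆ (zfStep G)^[m] (G.edgeEndpoints S) :=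
  zfStep_mono.le_iterate_comp_of_le (h := G.edgeEndpoints)
    edgeEndpoints_zfStep_lineGraph_subset m S

theorem IsZeroForcingSet.edgeEndpoints_of_lineGraph {S : Set G.edgeSet}
    (hS : IsZeroForcingSet G.lineGraph S) (hG : ∀ v, ∃ u, G.Adj v u) :
    IsZeroForcingSet G (G.edgeEndpoints S) := by
  obtain ⟨m, hm⟩ := hS
  refine ⟨m, Set.eq_univ_of_forall fun v => ?_⟩
  obtain ⟨u, hvu⟩ := hG v
  refine edgeEndpoints_zfStep_lineGraph_iterate_subset S m ?_
  rw [hm]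
  exact mem_edgeEndpoints.2 ⟨⟨s(v, u), hvu⟩, trivial, Sym2.mem_mk_left v u⟩

end SimpleGraph

/-- For any connected graph `G` of order at least 2, `Z(G) ≤ 2 Z(L(G))`. -/
theorem zeroForcingNum_le_two_mul_zeroForcingNum_lineGraph {V : Type*} [Fintype V]
    (G : SimpleGraph V) (hn : 2 ≤ Fintype.card V) (hconn : G.Connected) :
    zeroForcingNum G ≤ 2 * zeroForcingNum G.lineGraph := by
  have : Nontrivial V := Fintype.one_lt_card_iff_nontrivial.1 hn
  have hG : ∀ v, ∃ u, G.Adj v u := hconn.preconnected.exists_adj_of_nontrivial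
  obtain ⟨S, hS, hSZ⟩ := exists_isZeroForcingSet_ncard_eq_zeroForcingNum (G := G.lineGraph)
  calc zeroForcingNum G
      ≤ (G.edgeEndpoints S).ncard := zeroForcingNum_le_ncard (hS.edgeEndpoints_of_lineGraph hG)
    _ ≤ 2 * S.ncard := ncard_edgeEndpoints_le S.toFinite
    _ = 2 * zeroForcingNum G.lineGraph := by rw [hSZ]
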